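/- Let q be a real number with 0 < q < 1, h ∈ ℤ with h ≥ r, r a positive integer, n a natural number, and x > 0 real. Then [2]_q^r \sum_{m=0}^{\infty} \binom{m+r-1}{m}_q (-q^{h-r+1})^m [m+x]_q^n = \frac{[2]_q^r}{(1-q)^n} \sum_{l=0}^{n} \binom{n}{l} \frac{(-q^x)^l}{\prod_{j=0}^{r-1} (1 + q^{h-r+l+1+j})}. -/

import Mathlib

/-
Expanding `[m + x]_q^n = (1 - q)^{-n} (1 - q^x q^m)^n` by the binomial theorem turns the series
into a finite combination of the series `∑ₘ binom(m+r-1, m)_q tᵐ` at `t = -q^{h-r+1+l}`, and the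
q-binomial theorem `∑ₘ binom(m+r-1, m)_q tᵐ = ∏_{j<r} (1 - qʲ t)⁻¹` (valid for `|t| < 1`) sums
each of them. The q-binomial theorem follows by induction on `r` from the q-hockey-stick identity
`binom(m+r, m)_q = ∑_{k≤m} qᵏ binom(k+r-1, k)_q`, which exhibits the series for `r + 1` as the
Cauchy product of the series for `r` at `q t` with the geometric series at `t`.
-/

noncomputable def qnum (q x : ℝ) : ℝ := (1 - q ^ x) / (1 - q)

/-- Gaussian binomial coefficient via the q-Pascal recurrence. -/
noncomputable def gbinom (q : ℝ) : ℕ → ℕ → ℝ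
  | 0, 0 => 1
  | 0, _ + 1 => 0
  | _ + 1, 0 => 1
  | n + 1, k + 1 => gbinom q n k + q ^ (k + 1) * gbinom q n (k + 1)

open Finset

section GaussianBinomial

variable (q : ℝ)

lemma gbinom_zero_right (n : ℕ) : gbinom q n 0 = 1 := by
  cases n <;> rfl

lemma gbinom_succ_succ (n k : ℕ) :
    gbinom q (n + 1) (k + 1) = gbinom q n k + q ^ (k + 1) * gbinom q n (k + 1) :=
  rfl

lemma gbinom_eq_zero_of_lt : ∀ {n k : ℕ}, n < k → gbinom q n k = 0
  | 0, _ + 1, _ => rfl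
  | n + 1, k + 1, h => by
    rw [gbinom_succ_succ, gbinom_eq_zero_of_lt (by omega), gbinom_eq_zero_of_lt (by omega)]
    ring

variable {q}

lemma gbinom_nonneg (hq : 0 ≤ q) : ∀ n k : ℕ, 0 ≤ gbinom q n k
  | 0, 0 => zero_le_one
  | 0, _ + 1 => le_rfl
  | _ + 1, 0 => zero_le_one
  | n + 1, k + 1 =>
    add_nonneg (gbinom_nonneg hq n k) (mul_nonneg (pow_nonneg hq _) (gbinom_nonneg hq n (k + 1)))

variable (q)

lemma gbinom_add_eq_sum_range (r : ℕ) : ∀ m : ℕ,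
    gbinom q (m + r) m = ∑ k ∈ range (m + 1), q ^ k * gbinom q (k + r - 1) k
  | 0 => by simp [gbinom_zero_right]
  | m + 1 => by
    rw [sum_range_succ, ← gbinom_add_eq_sum_range r m, show m + 1 + r - 1 = m + r by omega,
      show m + 1 + r = m + r + 1 by omega, gbinom_succ_succ]

variable {q}

theorem hasSum_gbinom_mul_pow (hq0 : 0 ≤ q) (hq1 : q < 1) (r : ℕ) {t : ℝ} (ht : |t| < 1) :
    HasSum (fun m ↦ gbinom q (m + r - 1) m * t ^ m) (∏ j ∈ range r, (1 - q ^ j * t)⁻¹) := by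
  induction r generalizing t with
  | zero =>
    have hvanish : ∀ m ≠ 0, gbinom q (m + 0 - 1) m * t ^ m = 0 := fun m hm ↦ by
      rw [gbinom_eq_zero_of_lt q (by omega), zero_mul]
    simpa [gbinom_zero_right] using hasSum_single 0 hvanish
  | succ r ih =>
    have hqt : |q * t| < 1 := by
      rw [abs_mul, abs_of_nonneg hq0]
      nlinarith [abs_nonneg t]
    -- the coefficients are nonnegative, so `ih` at `|q * t|` gives absolute convergence
    have hsummable_norm : Summable fun m ↦ ‖gbinom q (m + r - 1) m * (q * t) ^ m‖ :=
      (ih (t := |q * t|) (by rwa [abs_abs])).summable.congr fun m ↦ by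
        rw [norm_mul, norm_pow, Real.norm_of_nonneg (gbinom_nonneg hq0 _ _), Real.norm_eq_abs]
    have hgeom_norm : Summable fun m ↦ ‖t ^ m‖ := by
      simpa only [norm_pow, Real.norm_eq_abs] using summable_geometric_of_lt_one (abs_nonneg t) ht
    have hcauchy := hasSum_sum_range_mul_of_summable_norm hsummable_norm hgeom_norm
    rw [(ih hqt).tsum_eq, (hasSum_geometric_of_abs_lt_one ht).tsum_eq] at hcauchy
    have hcoeff : (fun m ↦ gbinom q (m + (r + 1) - 1) m * t ^ m) =
        fun m ↦ ∑ k ∈ range (m + 1), gbinom q (k + r - 1) k * (q * t) ^ k * t ^ (m - k) := by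
      funext m
      rw [show m + (r + 1) - 1 = m + r by omega, gbinom_add_eq_sum_range, sum_mul]
      refine sum_congr rfl fun k hk ↦ ?_
      rw [← pow_mul_pow_sub t (Nat.le_of_lt_succ (mem_range.mp hk)), mul_pow]
      ring
    have hprod : ∏ j ∈ range (r + 1), (1 - q ^ j * t)⁻¹ =
        (∏ j ∈ range r, (1 - q ^ j * (q * t))⁻¹) * (1 - t)⁻¹ := by
      simp only [prod_range_succ', pow_succ, mul_assoc, pow_zero, one_mul]
    rwa [hcoeff, hprod]

end GaussianBinomial

section QSeries

variable {q : ℝ}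

lemma qnum_natCast_add_pow (hq : 0 < q) (m : ℕ) (x : ℝ) (n : ℕ) :
    qnum q (m + x) ^ n =
      (1 - q)⁻¹ ^ n * ∑ l ∈ range (n + 1), n.choose l * (-q ^ x) ^ l * (q ^ l) ^ m := by
  rw [qnum, Real.rpow_add hq, Real.rpow_natCast, div_eq_mul_inv, mul_pow, mul_comm,
    show 1 - q ^ m * q ^ x = -(q ^ m * q ^ x) + 1 by ring, add_pow]
  congr 1
  refine sum_congr rfl fun l _ ↦ ?_
  ring

theorem hasSum_gbinom_mul_pow_mul_qnum_pow (hq0 : 0 < q) (hq1 : q < 1) (r n : ℕ) {t : ℝ}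
    (ht : |t| < 1) (x : ℝ) :
    HasSum (fun m : ℕ ↦ gbinom q (m + r - 1) m * t ^ m * qnum q (m + x) ^ n)
      ((1 - q)⁻¹ ^ n * ∑ l ∈ range (n + 1),
        n.choose l * (-q ^ x) ^ l * ∏ j ∈ range r, (1 - q ^ j * (t * q ^ l))⁻¹) := by
  have hlt (l : ℕ) : |t * q ^ l| < 1 := by
    rw [abs_mul, abs_pow, abs_of_pos hq0]
    exact mul_lt_one_of_nonneg_of_lt_one_left (abs_nonneg t) ht (pow_le_one₀ hq0.le hq1.le)
  have hterm (l : ℕ) := (hasSum_gbinom_mul_pow hq0.le hq1 r (hlt l)).mul_left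
    (n.choose l * (-q ^ x) ^ l)
  refine ((hasSum_sum fun l _ ↦ hterm l).mul_left ((1 - q)⁻¹ ^ n)).congr_fun fun m ↦ ?_
  rw [qnum_natCast_add_pow hq0, mul_left_comm, mul_sum]
  congr 1
  refine sum_congr rfl fun l _ ↦ ?_
  ring

end QSeries

theorem series_eq_closed_form_general (q : ℝ) (hq0 : 0 < q) (hq1 : q < 1)
    (h : ℤ) (r : ℕ) (hhr : (r : ℤ) ≤ h) (n : ℕ) (x : ℝ) :
    (1 + q) ^ r *
        (∑' m : ℕ, gbinom q (m + r - 1) m * (-(q : ℝ) ^ (h - r + 1)) ^ m *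
          (qnum q ((m : ℝ) + x)) ^ n) =
      ((1 + q) ^ r / (1 - q) ^ n) *
        ∑ l ∈ Finset.range (n + 1), (n.choose l : ℝ) * (-(q ^ x)) ^ l /
          ∏ j ∈ Finset.range r, (1 + q ^ (h - r + l + 1 + j)) := by
  have ht : |-q ^ (h - r + 1)| < 1 := by
    rw [abs_neg, abs_of_pos (zpow_pos hq0 _)]
    exact zpow_lt_one₀ hq0 hq1 (by omega)
  have hfactor (l j : ℕ) :
      1 - q ^ j * (-q ^ (h - r + 1) * q ^ l) = 1 + q ^ (h - r + l + 1 + j) := by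
    have hpow : q ^ (h - r + l + 1 + j) = q ^ j * (q ^ (h - r + 1) * q ^ l) := by
      rw [← zpow_natCast q j, ← zpow_natCast q l, ← zpow_add₀ hq0.ne', ← zpow_add₀ hq0.ne']
      congr 1
      ring
    rw [hpow]
    ring
  rw [(hasSum_gbinom_mul_pow_mul_qnum_pow hq0 hq1 r n ht x).tsum_eq, ← mul_assoc, inv_pow,
    ← div_eq_mul_inv]
  congr 1
  refine sum_congr rfl fun l _ ↦ ?_
  simp only [hfactor, prod_inv_distrib, div_eq_mul_inv]

theorem series_eq_closed_form (q : ℝ) (hq0 : 0 < q) (hq1 : q < 1)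
    (h : ℤ) (r : ℕ) (hr : 0 < r) (hhr : (r : ℤ) ≤ h) (n : ℕ) (x : ℝ) (hx : 0 < x) :
    (1 + q) ^ r *
        (∑' m : ℕ, gbinom q (m + r - 1) m * (-(q : ℝ) ^ (h - r + 1)) ^ m *
          (qnum q ((m : ℝ) + x)) ^ n) =
      ((1 + q) ^ r / (1 - q) ^ n) *
        ∑ l ∈ Finset.range (n + 1), (n.choose l : ℝ) * (-(q ^ x)) ^ l /
          ∏ j ∈ Finset.range r, (1 + q ^ (h - r + l + 1 + j)) :=
  series_eq_closed_form_general q hq0 hq1 h r hhr n x
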